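/- arXiv:2412.11191 — 4 statements merged into one kernel-verified Lean document; each statement's English description precedes it below -/
import Mathlib

section
/- There is an injective *-homomorphism from the C*-algebra c₀(2^ω) (complex sequences indexed by a set of cardinality continuum converging to 0) into the quotient C*-algebra ℓ∞/c₀. -/
open scoped ENNReal
open ZeroAtInfty Filter Topology

/-- ℓ∞: the C*-algebra of bounded complex sequences. -/
noncomputable abbrev LinfSeq : Type := lp (fun _ : ℕ => ℂ) ∞

/-- The set of elements of ℓ∞ belonging to the ideal c₀ (sequences converging to 0). -/
def c0Ideal : Set LinfSeq := {f | Tendsto (fun n : ℕ => f n) atTop (𝓝 0)}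

/-! ### An almost disjoint family of subsets of ℕ indexed by `ℕ → Bool` -/

noncomputable section StmtAux
open Classical
set_option linter.unusedSectionVars false

/-- encoding of the length-`k` prefix of `g`. -/
def prefEnc (g : ℕ → Bool) (k : ℕ) : ℕ := Encodable.encode (List.ofFn fun i : Fin k => g i)

lemma prefEnc_inj (g : ℕ → Bool) : Function.Injective (prefEnc g) := by
  intro k k' h
  have := Encodable.encode_injective h
  simpa using congrArg List.length this

def adSet (g : ℕ → Bool) : Set ℕ := Set.range (prefEnc g)

lemma adSet_infinite (g : ℕ → Bool) : (adSet g).Infinite :=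
  Set.infinite_range_of_injective (prefEnc_inj g)

lemma adSet_almostDisjoint {g h : ℕ → Bool} (hgh : g ≠ h) :
    (adSet g ∩ adSet h).Finite := by
  obtain ⟨k₀, hk₀⟩ := Function.ne_iff.mp hgh
  have hsub : adSet g ∩ adSet h ⊆ prefEnc g '' {k | k ≤ k₀} := by
    rintro m ⟨⟨k, rfl⟩, ⟨k', hk'⟩⟩
    have hl := Encodable.encode_injective hk'.symm
    have hlen : k = k' := by simpa using congrArg List.length hl
    subst hlen
    refine ⟨k, ?_, rfl⟩
    by_contra hlt
    have hlt : k₀ < k := lt_of_not_ge fun hh => hlt hh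
    have : g k₀ = h k₀ := by
      have h2 := congrArg (fun l => l[k₀]?) hl
      simp only [List.getElem?_ofFn] at h2
      rw [dif_pos hlt, dif_pos hlt] at h2
      exact Option.some_injective _ h2
    exact hk₀ this
  exact ((Set.finite_Iic k₀).image _).subset hsub

/-! ### The lift `Tf` of the embedding `c₀(κ) → ℓ∞/c₀` -/

variable {κ : Type} [TopologicalSpace κ] [DiscreteTopology κ]

lemma supp_finite (x : C₀(κ, ℂ)) {δ : ℝ} (hδ : 0 < δ) : {α | δ < ‖x α‖}.Finite := by
  have h : Tendsto x (cofinite) (𝓝 0) := by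
    have := zero_at_infty (f := x) (α := κ)
    rwa [cocompact_eq_cofinite] at this
  have hev : ∀ᶠ α in cofinite, ‖x α‖ < δ := by
    have := Metric.tendsto_nhds.mp h δ hδ
    simpa [dist_zero_right] using this
  rw [Filter.eventually_cofinite] at hev
  exact hev.subset fun α hα => not_lt.mpr (le_of_lt hα)

lemma bcf_bound (x : C₀(κ, ℂ)) (α : κ) : ‖x α‖ ≤ ‖x.toBCF‖ :=
  x.toBCF.norm_coe_le_norm α

def Fs (x : C₀(κ, ℂ)) (m : ℕ) : Set κ := {α | ((m : ℝ) + 1)⁻¹ < ‖x α‖}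

lemma Fs_finite (x : C₀(κ, ℂ)) (m : ℕ) : (Fs x m).Finite :=
  supp_finite x (by positivity)

variable (A : κ → Set ℕ)

/-- separation property: distinct indices in `F` have disjoint `A`-sets beyond `n`. -/
def SepF (F : Set κ) (n : ℕ) : Prop :=
  ∀ α ∈ F, ∀ β ∈ F, α ≠ β → ∀ k, n ≤ k → ¬(k ∈ A α ∧ k ∈ A β)

lemma sep_exists (had : ∀ α β, α ≠ β → (A α ∩ A β).Finite)
    {F : Set κ} (hF : F.Finite) : ∃ N, ∀ n, N ≤ n → SepF A F n := by
  have hfin : (⋃ α ∈ F, ⋃ β ∈ F, if α = β then (∅ : Set ℕ) else A α ∩ A β).Finite := by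
    refine Set.Finite.biUnion hF fun α _ => Set.Finite.biUnion hF fun β _ => ?_
    by_cases h : α = β
    · simp [h]
    · simpa [h] using had α β h
  obtain ⟨N, hN⟩ := hfin.bddAbove
  refine ⟨N + 1, fun n hn α hα β hβ hne k hk ⟨hk1, hk2⟩ => ?_⟩
  have : k ∈ ⋃ α ∈ F, ⋃ β ∈ F, if α = β then (∅ : Set ℕ) else A α ∩ A β := by
    refine Set.mem_biUnion hα (Set.mem_biUnion hβ ?_)
    simp [hne, hk1, hk2]
  have := hN this
  omega

def Pp (x : C₀(κ, ℂ)) (m n : ℕ) : Prop := SepF A (Fs x m) n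

lemma Pp_eventually (had : ∀ α β, α ≠ β → (A α ∩ A β).Finite) (x : C₀(κ, ℂ)) (m : ℕ) :
    ∀ᶠ n in atTop, Pp A x m n := by
  obtain ⟨N, hN⟩ := sep_exists A had (Fs_finite x m)
  exact eventually_atTop.mpr ⟨N, hN⟩

def mf (x : C₀(κ, ℂ)) (n : ℕ) : ℕ := Nat.findGreatest (fun m => Pp A x m n) n

lemma mf_tendsto (had : ∀ α β, α ≠ β → (A α ∩ A β).Finite) (x : C₀(κ, ℂ)) :
    Tendsto (mf A x) atTop atTop := by
  rw [tendsto_atTop]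
  intro M
  filter_upwards [Pp_eventually A had x M, eventually_ge_atTop M] with n h1 h2
  exact Nat.le_findGreatest h2 h1

lemma Pp_mf_eventually (had : ∀ α β, α ≠ β → (A α ∩ A β).Finite) (x : C₀(κ, ℂ)) :
    ∀ᶠ n in atTop, Pp A x (mf A x n) n := by
  filter_upwards [Pp_eventually A had x 0] with n h0
  exact Nat.findGreatest_spec (P := fun m => Pp A x m n) (Nat.zero_le n) h0

def Tf (x : C₀(κ, ℂ)) (n : ℕ) : ℂ :=
  if h : Pp A x (mf A x n) n ∧ ∃ α, α ∈ Fs x (mf A x n) ∧ n ∈ A α then x h.2.choose else 0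

lemma Tf_norm_le (x : C₀(κ, ℂ)) (n : ℕ) {B : ℝ} (hB : ∀ α, ‖x α‖ ≤ B) (hB0 : 0 ≤ B) :
    ‖Tf A x n‖ ≤ B := by
  rw [Tf]; split
  · exact hB _
  · simpa using hB0

def gv (G : Finset κ) (x : C₀(κ, ℂ)) (n : ℕ) : ℂ :=
  if h : ∃ α ∈ G, n ∈ A α then x h.choose else 0

lemma gv_add (G : Finset κ) (x y : C₀(κ, ℂ)) (n : ℕ) :
    gv A G (x + y) n = gv A G x n + gv A G y n := by
  by_cases h : ∃ α ∈ G, n ∈ A α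
  · rw [gv, gv, gv, dif_pos h, dif_pos h, dif_pos h]; simp
  · rw [gv, gv, gv, dif_neg h, dif_neg h, dif_neg h]; simp

lemma gv_mul (G : Finset κ) (x y : C₀(κ, ℂ)) (n : ℕ) :
    gv A G (x * y) n = gv A G x n * gv A G y n := by
  by_cases h : ∃ α ∈ G, n ∈ A α
  · rw [gv, gv, gv, dif_pos h, dif_pos h, dif_pos h]; simp
  · rw [gv, gv, gv, dif_neg h, dif_neg h, dif_neg h]; simp

lemma gv_star (G : Finset κ) (x : C₀(κ, ℂ)) (n : ℕ) :
    gv A G (star x) n = star (gv A G x n) := by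
  by_cases h : ∃ α ∈ G, n ∈ A α
  · rw [gv, gv, dif_pos h, dif_pos h]; simp
  · rw [gv, gv, dif_neg h, dif_neg h]; simp

lemma gv_smul (G : Finset κ) (c : ℂ) (x : C₀(κ, ℂ)) (n : ℕ) :
    gv A G (c • x) n = c • gv A G x n := by
  by_cases h : ∃ α ∈ G, n ∈ A α
  · rw [gv, gv, dif_pos h, dif_pos h]; simp
  · rw [gv, gv, dif_neg h, dif_neg h]; simp

lemma gv_norm_le (G : Finset κ) (x : C₀(κ, ℂ)) (n : ℕ) {B : ℝ}
    (hB : ∀ α, ‖x α‖ ≤ B) (hB0 : 0 ≤ B) : ‖gv A G x n‖ ≤ B := by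
  rw [gv]; split
  · exact hB _
  · simpa using hB0

lemma Tf_approx (had : ∀ α β, α ≠ β → (A α ∩ A β).Finite) (x : C₀(κ, ℂ)) {δ : ℝ}
    (hδ : 0 < δ) (G : Finset κ) (hG : ∀ α, δ < ‖x α‖ → α ∈ G) :
    ∀ᶠ n in atTop, ‖Tf A x n - gv A G x n‖ ≤ 2 * δ := by
  obtain ⟨M, hM⟩ := exists_nat_gt δ⁻¹
  obtain ⟨N, hN⟩ := sep_exists A had (G.finite_toSet)
  filter_upwards [(mf_tendsto A had x).eventually_ge_atTop M, Pp_mf_eventually A had x,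
    eventually_ge_atTop N] with n hMm hP hn
  have hsep : SepF A (↑G) n := hN n hn
  set m := mf A x n with hm
  have hthr : ((m : ℝ) + 1)⁻¹ ≤ δ := by
    have h1 : ((m : ℝ) + 1)⁻¹ ≤ ((M : ℝ) + 1)⁻¹ := by
      apply inv_anti₀ (by positivity)
      have : (M : ℝ) ≤ (m : ℝ) := Nat.cast_le.mpr hMm
      linarith
    have h2 : ((M : ℝ) + 1)⁻¹ ≤ δ := by
      rw [inv_le_comm₀ (by positivity) hδ]
      linarith
    linarith
  have hsmall : ∀ α, α ∉ Fs x m → ‖x α‖ ≤ δ := fun α hα => le_trans (not_lt.mp hα) hthr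
  by_cases hg : ∃ α ∈ G, n ∈ A α
  · have hgv : gv A G x n = x hg.choose := by rw [gv, dif_pos hg]
    obtain ⟨hα₀G, hα₀A⟩ := hg.choose_spec
    by_cases ht : ∃ α, α ∈ Fs x m ∧ n ∈ A α
    · have hTf : Tf A x n = x ht.choose := by rw [Tf, dif_pos (⟨hP, ht⟩ : _ ∧ _)]
      obtain ⟨hβF, hβA⟩ := ht.choose_spec
      by_cases hβG : ht.choose ∈ G
      · have heq : ht.choose = hg.choose := by
          by_contra hne
          exact hsep _ hβG _ hα₀G hne n le_rfl ⟨hβA, hα₀A⟩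
        rw [hTf, hgv, heq, sub_self, norm_zero]
        positivity
      · have h1 : ‖x ht.choose‖ ≤ δ := not_lt.mp fun hh => hβG (hG _ hh)
        have hne : hg.choose ≠ ht.choose := fun e => hβG (e ▸ hα₀G)
        have h2 : hg.choose ∉ Fs x m := fun hF =>
          hP _ hF _ hβF hne n le_rfl ⟨hα₀A, hβA⟩
        have h3 : ‖x hg.choose‖ ≤ δ := hsmall _ h2
        rw [hTf, hgv]
        calc ‖x ht.choose - x hg.choose‖ ≤ ‖x ht.choose‖ + ‖x hg.choose‖ := norm_sub_le _ _
          _ ≤ 2 * δ := by linarith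
    · have hTf : Tf A x n = 0 := by rw [Tf, dif_neg (fun hc => ht hc.2)]
      have h2 : hg.choose ∉ Fs x m := fun hF => ht ⟨hg.choose, hF, hα₀A⟩
      rw [hTf, hgv, zero_sub, norm_neg]
      have := hsmall _ h2
      linarith
  · have hgv : gv A G x n = 0 := by rw [gv, dif_neg hg]
    rw [hgv, sub_zero]
    by_cases ht : ∃ α, α ∈ Fs x m ∧ n ∈ A α
    · have hTf : Tf A x n = x ht.choose := by rw [Tf, dif_pos (⟨hP, ht⟩ : _ ∧ _)]
      obtain ⟨hβF, hβA⟩ := ht.choose_spec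
      have hβG : ht.choose ∉ G := fun hh => hg ⟨ht.choose, hh, hβA⟩
      have h1 : ‖x ht.choose‖ ≤ δ := not_lt.mp fun hh => hβG (hG _ hh)
      rw [hTf]; linarith
    · have hTf : Tf A x n = 0 := by rw [Tf, dif_neg (fun hc => ht hc.2)]
      rw [hTf, norm_zero]; positivity

/-- `Tf` hits the value `x α` along a tail of `A α`, provided `x α ≠ 0`. -/
lemma Tf_eventually_eq (had : ∀ α β, α ≠ β → (A α ∩ A β).Finite) (x : C₀(κ, ℂ)) (α : κ)
    (hα : 0 < ‖x α‖) :
    ∀ᶠ n in atTop, n ∈ A α → Tf A x n = x α := by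
  obtain ⟨M, hM⟩ := exists_nat_gt ‖x α‖⁻¹
  filter_upwards [(mf_tendsto A had x).eventually_ge_atTop M, Pp_mf_eventually A had x]
    with n hMm hP hnA
  set m := mf A x n with hm
  have hαF : α ∈ Fs x m := by
    show ((m : ℝ) + 1)⁻¹ < ‖x α‖
    have h1 : ((m : ℝ) + 1)⁻¹ ≤ ((M : ℝ) + 1)⁻¹ := by
      apply inv_anti₀ (by positivity)
      have : (M : ℝ) ≤ (m : ℝ) := Nat.cast_le.mpr hMm
      linarith
    have h2 : ((M : ℝ) + 1)⁻¹ < ‖x α‖ := by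
      rw [inv_lt_comm₀ (by positivity) hα]
      linarith
    linarith
  have ht : ∃ β, β ∈ Fs x m ∧ n ∈ A β := ⟨α, hαF, hnA⟩
  have hTf : Tf A x n = x ht.choose := by rw [Tf, dif_pos (⟨hP, ht⟩ : _ ∧ _)]
  obtain ⟨hβF, hβA⟩ := ht.choose_spec
  have : ht.choose = α := by
    by_contra hne
    exact hP _ hβF _ hαF hne n le_rfl ⟨hβA, hnA⟩
  rw [hTf, this]

end StmtAux

/-- There is an injective *-homomorphism from c₀(2^ω) into ℓ∞/c₀.  The embedding into the
quotient is encoded by a set-theoretic lift `T : c₀(2^ω) → ℓ∞` which is a *-homomorphism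
modulo the ideal c₀ and is injective modulo c₀. -/
theorem stmt0 (κ : Type) [TopologicalSpace κ] [DiscreteTopology κ]
    (hκ : Cardinal.mk κ = Cardinal.continuum) :
    ∃ T : C₀(κ, ℂ) → LinfSeq,
      (∀ x y, T (x + y) - (T x + T y) ∈ c0Ideal) ∧
      (∀ x y, T (x * y) - T x * T y ∈ c0Ideal) ∧
      (∀ x, T (star x) - star (T x) ∈ c0Ideal) ∧
      (∀ (c : ℂ) x, T (c • x) - c • T x ∈ c0Ideal) ∧
      (∀ x, T x ∈ c0Ideal → x = 0) := by
  classical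
  -- an injection of κ into `ℕ → Bool`
  have hle : Cardinal.mk κ ≤ Cardinal.mk (ℕ → Bool) := by
    rw [hκ]
    have : Cardinal.mk (ℕ → Bool) = 2 ^ Cardinal.aleph0 := by
      rw [← Cardinal.mk_nat, ← Cardinal.mk_bool, Cardinal.power_def]
    rw [this, Cardinal.two_power_aleph0]
  obtain ⟨r⟩ := (Cardinal.le_def κ (ℕ → Bool)).mp hle
  -- the almost disjoint family
  set A : κ → Set ℕ := fun α => adSet (r α) with hA
  have hinf : ∀ α, (A α).Infinite := fun α => adSet_infinite _
  have had : ∀ α β, α ≠ β → (A α ∩ A β).Finite := fun α β hne =>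
    adSet_almostDisjoint (fun e => hne (r.injective e))
  -- the lift
  have hBdd : ∀ x : C₀(κ, ℂ), Memℓp (Tf A x) ∞ := by
    intro x
    apply memℓp_infty
    refine ⟨‖x.toBCF‖, ?_⟩
    rintro b ⟨n, rfl⟩
    exact Tf_norm_le A x n (bcf_bound x) (norm_nonneg _)
  refine ⟨fun x => ⟨Tf A x, hBdd x⟩, ?_, ?_, ?_, ?_, ?_⟩
  · -- additivity mod c₀
    intro x y
    show Tendsto _ atTop (𝓝 0)
    rw [NormedAddCommGroup.tendsto_nhds_zero]
    intro ε hε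
    set δ : ℝ := ε / 7 with hδdef
    have hδ : 0 < δ := by positivity
    set G : Finset κ := (supp_finite x hδ).toFinset ∪ (supp_finite y hδ).toFinset ∪
      (supp_finite (x + y) hδ).toFinset with hG
    have hGx : ∀ α, δ < ‖x α‖ → α ∈ G := fun α h =>
      Finset.mem_union_left _ (Finset.mem_union_left _
        ((supp_finite x hδ).mem_toFinset.mpr h))
    have hGy : ∀ α, δ < ‖y α‖ → α ∈ G := fun α h =>
      Finset.mem_union_left _ (Finset.mem_union_right _
        ((supp_finite y hδ).mem_toFinset.mpr h))
    have hGxy : ∀ α, δ < ‖(x + y) α‖ → α ∈ G := fun α h =>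
      Finset.mem_union_right _ ((supp_finite (x + y) hδ).mem_toFinset.mpr h)
    filter_upwards [Tf_approx A had x hδ G hGx, Tf_approx A had y hδ G hGy,
      Tf_approx A had (x + y) hδ G hGxy] with n h1 h2 h3
    rw [lp.coeFn_sub, lp.coeFn_add]
    simp only [Pi.sub_apply, Pi.add_apply]
    show ‖Tf A (x + y) n - (Tf A x n + Tf A y n)‖ < ε
    have key : Tf A (x + y) n - (Tf A x n + Tf A y n)
        = (Tf A (x + y) n - gv A G (x + y) n) + ((gv A G x n - Tf A x n)
          + (gv A G y n - Tf A y n)) := by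
      rw [gv_add]; ring
    rw [key]
    calc ‖_ + _‖ ≤ ‖Tf A (x + y) n - gv A G (x + y) n‖ +
          (‖gv A G x n - Tf A x n‖ + ‖gv A G y n - Tf A y n‖) :=
            le_trans (norm_add_le _ _) (by gcongr; exact norm_add_le _ _)
      _ = ‖Tf A (x + y) n - gv A G (x + y) n‖ +
          (‖Tf A x n - gv A G x n‖ + ‖Tf A y n - gv A G y n‖) := by
            rw [norm_sub_rev (gv A G x n), norm_sub_rev (gv A G y n)]
      _ ≤ 2 * δ + (2 * δ + 2 * δ) := by gcongr
      _ < ε := by rw [hδdef]; linarith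
  · -- multiplicativity mod c₀
    intro x y
    show Tendsto _ atTop (𝓝 0)
    rw [NormedAddCommGroup.tendsto_nhds_zero]
    intro ε hε
    set Bx : ℝ := ‖x.toBCF‖ with hBx
    set By : ℝ := ‖y.toBCF‖ with hBy
    have hBx0 : 0 ≤ Bx := norm_nonneg _
    have hBy0 : 0 ≤ By := norm_nonneg _
    set δ : ℝ := ε / (2 * (1 + Bx + By) + 1) with hδdef
    have hδ : 0 < δ := by positivity
    set G : Finset κ := (supp_finite x hδ).toFinset ∪ (supp_finite y hδ).toFinset ∪
      (supp_finite (x * y) hδ).toFinset with hG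
    have hGx : ∀ α, δ < ‖x α‖ → α ∈ G := fun α h =>
      Finset.mem_union_left _ (Finset.mem_union_left _
        ((supp_finite x hδ).mem_toFinset.mpr h))
    have hGy : ∀ α, δ < ‖y α‖ → α ∈ G := fun α h =>
      Finset.mem_union_left _ (Finset.mem_union_right _
        ((supp_finite y hδ).mem_toFinset.mpr h))
    have hGxy : ∀ α, δ < ‖(x * y) α‖ → α ∈ G := fun α h =>
      Finset.mem_union_right _ ((supp_finite (x * y) hδ).mem_toFinset.mpr h)
    filter_upwards [Tf_approx A had x hδ G hGx, Tf_approx A had y hδ G hGy,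
      Tf_approx A had (x * y) hδ G hGxy] with n h1 h2 h3
    rw [lp.coeFn_sub, lp.infty_coeFn_mul]
    simp only [Pi.sub_apply, Pi.mul_apply]
    show ‖Tf A (x * y) n - Tf A x n * Tf A y n‖ < ε
    have key : Tf A (x * y) n - Tf A x n * Tf A y n
        = (Tf A (x * y) n - gv A G (x * y) n)
          + (gv A G x n * (gv A G y n - Tf A y n)
          + (gv A G x n - Tf A x n) * Tf A y n) := by
      rw [gv_mul]; ring
    rw [key]
    have b1 : ‖gv A G x n‖ ≤ Bx := gv_norm_le A G x n (bcf_bound x) hBx0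
    have b2 : ‖Tf A y n‖ ≤ By := Tf_norm_le A y n (bcf_bound y) hBy0
    have hδε : 2 * δ + Bx * (2 * δ) + (2 * δ) * By < ε := by
      have h7 : 0 < 2 * (1 + Bx + By) + 1 := by positivity
      have : δ * (2 * (1 + Bx + By) + 1) = ε := by
        rw [hδdef]; field_simp
      nlinarith
    calc ‖_ + _‖ ≤ ‖Tf A (x * y) n - gv A G (x * y) n‖
          + (‖gv A G x n‖ * ‖gv A G y n - Tf A y n‖
          + ‖gv A G x n - Tf A x n‖ * ‖Tf A y n‖) := by
            refine le_trans (norm_add_le _ _) ?_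
            gcongr
            refine le_trans (norm_add_le _ _) ?_
            gcongr <;> [exact norm_mul_le _ _; exact norm_mul_le _ _]
      _ ≤ 2 * δ + (Bx * (2 * δ) + (2 * δ) * By) := by
            rw [norm_sub_rev (gv A G y n), norm_sub_rev (gv A G x n)]
            gcongr <;> first | assumption | positivity
      _ < ε := by linarith
  · -- star mod c₀
    intro x
    show Tendsto _ atTop (𝓝 0)
    rw [NormedAddCommGroup.tendsto_nhds_zero]
    intro ε hε
    set δ : ℝ := ε / 5 with hδdef
    have hδ : 0 < δ := by positivity
    set G : Finset κ := (supp_finite x hδ).toFinset ∪ (supp_finite (star x) hδ).toFinset with hG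
    have hGx : ∀ α, δ < ‖x α‖ → α ∈ G := fun α h =>
      Finset.mem_union_left _ ((supp_finite x hδ).mem_toFinset.mpr h)
    have hGs : ∀ α, δ < ‖(star x) α‖ → α ∈ G := fun α h =>
      Finset.mem_union_right _ ((supp_finite (star x) hδ).mem_toFinset.mpr h)
    filter_upwards [Tf_approx A had x hδ G hGx, Tf_approx A had (star x) hδ G hGs]
      with n h1 h2
    rw [lp.coeFn_sub, lp.coeFn_star]
    simp only [Pi.sub_apply, Pi.star_apply]
    show ‖Tf A (star x) n - star (Tf A x n)‖ < ε
    have key : Tf A (star x) n - star (Tf A x n)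
        = (Tf A (star x) n - gv A G (star x) n) + star (gv A G x n - Tf A x n) := by
      rw [gv_star, star_sub]; ring
    rw [key]
    calc ‖_ + _‖ ≤ ‖Tf A (star x) n - gv A G (star x) n‖
          + ‖star (gv A G x n - Tf A x n)‖ := norm_add_le _ _
      _ = ‖Tf A (star x) n - gv A G (star x) n‖ + ‖Tf A x n - gv A G x n‖ := by
            rw [norm_star, norm_sub_rev (gv A G x n)]
      _ ≤ 2 * δ + 2 * δ := by gcongr
      _ < ε := by rw [hδdef]; linarith
  · -- scalar multiplication mod c₀
    intro c x
    show Tendsto _ atTop (𝓝 0)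
    rw [NormedAddCommGroup.tendsto_nhds_zero]
    intro ε hε
    set δ : ℝ := ε / (2 * (1 + ‖c‖) + 1) with hδdef
    have hδ : 0 < δ := by positivity
    set G : Finset κ := (supp_finite x hδ).toFinset ∪ (supp_finite (c • x) hδ).toFinset with hG
    have hGx : ∀ α, δ < ‖x α‖ → α ∈ G := fun α h =>
      Finset.mem_union_left _ ((supp_finite x hδ).mem_toFinset.mpr h)
    have hGs : ∀ α, δ < ‖(c • x) α‖ → α ∈ G := fun α h =>
      Finset.mem_union_right _ ((supp_finite (c • x) hδ).mem_toFinset.mpr h)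
    filter_upwards [Tf_approx A had x hδ G hGx, Tf_approx A had (c • x) hδ G hGs]
      with n h1 h2
    rw [lp.coeFn_sub, lp.coeFn_smul]
    simp only [Pi.sub_apply, Pi.smul_apply]
    show ‖Tf A (c • x) n - c • Tf A x n‖ < ε
    have key : Tf A (c • x) n - c • Tf A x n
        = (Tf A (c • x) n - gv A G (c • x) n) + c • (gv A G x n - Tf A x n) := by
      rw [gv_smul]; rw [smul_sub]; ring
    rw [key]
    have hδε : 2 * δ + ‖c‖ * (2 * δ) < ε := by
      have h7 : 0 < 2 * (1 + ‖c‖) + 1 := by positivity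
      have : δ * (2 * (1 + ‖c‖) + 1) = ε := by rw [hδdef]; field_simp
      nlinarith [norm_nonneg c]
    calc ‖_ + _‖ ≤ ‖Tf A (c • x) n - gv A G (c • x) n‖
          + ‖c‖ * ‖gv A G x n - Tf A x n‖ := by
            refine le_trans (norm_add_le _ _) ?_
            gcongr
            exact norm_smul_le _ _
      _ = ‖Tf A (c • x) n - gv A G (c • x) n‖ + ‖c‖ * ‖Tf A x n - gv A G x n‖ := by
            rw [norm_sub_rev (gv A G x n)]
      _ ≤ 2 * δ + ‖c‖ * (2 * δ) := by gcongr
      _ < ε := hδε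
  · -- injectivity mod c₀
    intro x hx
    by_contra hx0
    obtain ⟨α, hα⟩ : ∃ α, x α ≠ 0 := by
      by_contra h
      push_neg at h
      exact hx0 (DFunLike.ext _ _ fun α => h α)
    have hd : 0 < ‖x α‖ := norm_pos_iff.mpr hα
    have hx' : Tendsto (fun n => Tf A x n) atTop (𝓝 0) := hx
    have hev : ∀ᶠ n in atTop, ‖Tf A x n‖ < ‖x α‖ := by
      rw [NormedAddCommGroup.tendsto_nhds_zero] at hx'
      exact hx' _ hd
    have hfreq : ∃ᶠ n in atTop, n ∈ A α :=
      Nat.frequently_atTop_iff_infinite.mpr (hinf α)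
    have := ((Tf_eventually_eq A had x α hd).and hev).and_frequently hfreq
    obtain ⟨n, ⟨heq, hlt⟩, hmem⟩ := this.exists
    rw [heq hmem] at hlt
    exact lt_irrefl _ hlt
end

section
/- For every infinite-dimensional (infinite-rank) projection E in B(ℓ₂) there exists a very orthonormal sequence (vₙ) of unit vectors with finite support and rational squared moduli of coordinates such that ‖E(vₙ)‖ ≥ 1 − 1/(n+1) for every n ∈ ℕ. -/
open scoped ENNReal

/-- ℓ₂: the Hilbert space of square-summable complex sequences. -/
noncomputable abbrev Ell2 : Type := lp (fun _ : ℕ => ℂ) 2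

/-- Fin₁(√ℚ): unit vectors with finite support whose coordinates have rational squared moduli. -/
def Fin1SqrtQ : Set Ell2 :=
  {v | ‖v‖ = 1 ∧ (∀ m : ℕ, ∃ q : ℚ, ‖(v m : ℂ)‖ ^ 2 = (q : ℝ)) ∧
    {m : ℕ | v m ≠ 0}.Finite}

/-- A very orthonormal sequence: an orthonormal sequence of members of Fin₁(√ℚ) with
vₙ(m) = 0 for all m < n. -/
def VeryOrthonormal (v : ℕ → Ell2) : Prop :=
  Orthonormal ℂ v ∧ (∀ n, v n ∈ Fin1SqrtQ) ∧ ∀ n m, m < n → v n m = 0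

local notation "⟪" x ", " y "⟫" => inner (𝕜 := ℂ) x y

lemma projNormLe (E : Ell2 →L[ℂ] Ell2) (hidem : IsIdempotentElem E) (hsa : IsSelfAdjoint E)
    (x : Ell2) : ‖E x‖ ≤ ‖x‖ := by
  have hEE : E (E x) = E x := by
    rw [← ContinuousLinearMap.mul_apply, hidem]
  have hsym : ∀ a b : Ell2, ⟪E a, b⟫ = ⟪a, E b⟫ := by
    intro a b
    rw [← hsa.adjoint_eq, ContinuousLinearMap.adjoint_inner_left, hsa.adjoint_eq]
  have h1 : ⟪E x, E x⟫ = ⟪x, E x⟫ := by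
    rw [hsym, hEE]
  rcases eq_or_lt_of_le (norm_nonneg (E x)) with h0 | h0
  · rw [← h0]; exact norm_nonneg x
  have h2 : ‖E x‖ * ‖E x‖ ≤ ‖x‖ * ‖E x‖ := by
    have e1 : ‖E x‖ * ‖E x‖ = RCLike.re ⟪E x, E x⟫ := by
      rw [← @inner_self_eq_norm_mul_norm ℂ]
    rw [e1, h1]
    calc RCLike.re ⟪x, E x⟫ ≤ ‖(⟪x, E x⟫ : ℂ)‖ := RCLike.re_le_norm _
      _ ≤ ‖x‖ * ‖E x‖ := norm_inner_le_norm x (E x)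
  exact le_of_mul_le_mul_right h2 h0

lemma innerZeroOfDisjoint (x y : Ell2) (h : ∀ m, x m = 0 ∨ y m = 0) :
    ⟪x, y⟫ = 0 := by
  rw [lp.inner_eq_tsum]
  have h' : ∀ m : ℕ, (starRingEnd ℂ) (x m) * y m = 0 := by
    intro m; rcases h m with h | h <;> simp [h]
  simp [RCLike.inner_apply, fun m => (mul_comm (y m) _).trans (h' m)]

lemma gaussNear (z : ℂ) {ε : ℝ} (hε : 0 < ε) :
    ∃ w : ℂ, ‖w - z‖ < ε ∧ (∃ q : ℚ, ‖w‖ ^ 2 = (q : ℝ)) ∧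
      (z = 0 → w = 0) := by
  rcases eq_or_ne z 0 with rfl | hz
  · exact ⟨0, by simpa using hε, ⟨0, by simp⟩, fun _ => rfl⟩
  obtain ⟨a, ha⟩ := exists_rat_near z.re (by positivity : (0:ℝ) < ε/2)
  obtain ⟨c, hc⟩ := exists_rat_near z.im (by positivity : (0:ℝ) < ε/2)
  set w : ℂ := ((a : ℝ) : ℂ) + ((c : ℝ) : ℂ) * Complex.I with hw
  have hre : (w - z).re = (a : ℝ) - z.re := by simp [hw]
  have him : (w - z).im = (c : ℝ) - z.im := by simp [hw]
  refine ⟨w, ?_, ⟨a^2 + c^2, ?_⟩, fun h => absurd h hz⟩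
  · calc ‖w - z‖ ≤ |(w - z).re| + |(w - z).im| :=
          Complex.norm_le_abs_re_add_abs_im _
      _ < ε := by
          have ha' : |(a:ℝ) - z.re| < ε/2 := by rwa [abs_sub_comm]
          have hc' : |(c:ℝ) - z.im| < ε/2 := by rwa [abs_sub_comm]
          rw [hre, him]; linarith
  · rw [Complex.sq_norm, Complex.normSq_apply]
    have h1 : w.re = (a : ℝ) := by simp [hw]
    have h2 : w.im = (c : ℝ) := by simp [hw]
    rw [h1, h2]
    push_cast
    ring

lemma existsUnitInRange (E : Ell2 →L[ℂ] Ell2) (hidem : IsIdempotentElem E)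
    (hsa : IsSelfAdjoint E)
    (hrank : ¬ FiniteDimensional ℂ (LinearMap.range (E : Ell2 →ₗ[ℂ] Ell2))) (b : ℕ) :
    ∃ u : Ell2, ‖u‖ = 1 ∧ E u = u ∧ ∀ m, m < b → u m = 0 := by
  classical
  have hsym : ∀ a b : Ell2, ⟪E a, b⟫ = ⟪a, E b⟫ := by
    intro a b
    rw [← hsa.adjoint_eq, ContinuousLinearMap.adjoint_inner_left, hsa.adjoint_eq]
  have hEE : ∀ x : Ell2, E (E x) = E x := fun x => by
    rw [← ContinuousLinearMap.mul_apply, hidem]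
  set R : Submodule ℂ Ell2 := LinearMap.range (E : Ell2 →ₗ[ℂ] Ell2) with hR
  have hmemR : ∀ x : Ell2, x ∈ R → E x = x := by
    rintro x ⟨y, rfl⟩
    exact hEE y
  have hErange : ∀ x : Ell2, E x ∈ R := fun x => ⟨x, rfl⟩
  set F : Submodule ℂ Ell2 :=
    Submodule.span ℂ ((fun m => E (lp.single 2 m 1)) '' (Set.Iio b)) with hF
  have hFfin : FiniteDimensional ℂ F :=
    FiniteDimensional.span_of_finite ℂ ((Set.finite_Iio b).image _)
  have hFR : F ≤ R := by
    rw [hF, Submodule.span_le]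
    rintro x ⟨m, -, rfl⟩
    exact hErange _
  obtain ⟨g, hgR, hgF, hg0⟩ : ∃ g, g ∈ R ∧ g ∈ Fᗮ ∧ g ≠ 0 := by
    by_contra hcon
    push_neg at hcon
    have hRF : R ≤ F := by
      intro x hx
      have hproj := Submodule.sub_starProjection_mem_orthogonal (K := F) x
      have hmem : x - (F.orthogonalProjection x : Ell2) ∈ R :=
        R.sub_mem hx (hFR (F.orthogonalProjection x).2)
      have hz := hcon _ hmem hproj
      rw [sub_eq_zero] at hz
      rw [hz]
      exact (F.orthogonalProjection x).2
    exact hrank (Submodule.finiteDimensional_of_le hRF)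
  have hgn : ‖g‖ ≠ 0 := norm_ne_zero_iff.mpr hg0
  refine ⟨((‖g‖ : ℂ))⁻¹ • g, ?_, ?_, ?_⟩
  · rw [norm_smul]
    simp [hgn]
  · rw [map_smul, hmemR g hgR]
  · intro m hm
    have hgen : E (lp.single 2 m 1) ∈ F := Submodule.subset_span ⟨m, hm, rfl⟩
    have h0 : ⟪E (lp.single 2 m 1), g⟫ = 0 := (Submodule.mem_orthogonal F g).mp hgF _ hgen
    rw [hsym, hmemR g hgR, lp.inner_single_left] at h0
    simp only [RCLike.inner_apply, map_one, one_mul] at h0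
    have : (((‖g‖ : ℂ))⁻¹ • g) m = ((‖g‖ : ℂ))⁻¹ • (g m) := by
      rw [lp.coeFn_smul]; rfl
    rw [mul_one] at h0
    rw [this, h0, smul_zero]

lemma singleSub (i : ℕ) (a b : ℂ) :
    lp.single (E := fun _ : ℕ => ℂ) 2 i (a - b) = lp.single 2 i a - lp.single 2 i b := by
  apply lp.ext
  funext j
  rw [lp.coeFn_sub]
  simp only [Pi.sub_apply, lp.single_apply, Pi.single_apply]
  split_ifs with h
  · subst h; simp
  · simp

lemma keyStep (E : Ell2 →L[ℂ] Ell2) (hidem : IsIdempotentElem E) (hsa : IsSelfAdjoint E)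
    (hrank : ¬ FiniteDimensional ℂ (LinearMap.range (E : Ell2 →ₗ[ℂ] Ell2))) (b n : ℕ) :
    ∃ p : Ell2 × ℕ,
      ‖p.1‖ = 1 ∧ (∀ m : ℕ, ∃ q : ℚ, ‖(p.1 m : ℂ)‖ ^ 2 = (q : ℝ)) ∧
      (∀ m, m < b → p.1 m = 0) ∧ (∀ m, p.2 ≤ m → p.1 m = 0) ∧ b ≤ p.2 ∧
      1 - 1 / ((n : ℝ) + 1) ≤ ‖E p.1‖ := by
  classical
  set ε : ℝ := 1 / ((n : ℝ) + 1) with hεdef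
  have hε : 0 < ε := by positivity
  have hε1 : ε ≤ 1 := by
    rw [hεdef, div_le_one (by positivity)]
    have : (0:ℝ) ≤ (n:ℝ) := Nat.cast_nonneg n
    linarith
  obtain ⟨u, hu1, hEu, hub⟩ := existsUnitInRange E hidem hsa hrank b
  -- truncation
  have hhs : HasSum (fun i : ℕ => lp.single 2 i (u i)) u :=
    lp.hasSum_single (by norm_num) u
  have htt := hhs.tendsto_sum_nat
  rw [Metric.tendsto_atTop] at htt
  obtain ⟨N₀, hN₀⟩ := htt (ε/4) (by positivity)
  set N : ℕ := max N₀ b with hNdef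
  set Pu : Ell2 := ∑ i ∈ Finset.range N, lp.single 2 i (u i) with hPudef
  have hPu_close : ‖Pu - u‖ < ε/4 := by
    have := hN₀ N (le_max_left _ _)
    rwa [dist_eq_norm] at this
  -- coordinate approximation
  have hzex : ∀ i : ℕ, ∃ w : ℂ, ‖w - u i‖ < ε/(4*(N+1)) ∧
      (∃ q : ℚ, ‖w‖ ^ 2 = (q : ℝ)) ∧ (u i = 0 → w = 0) :=
    fun i => gaussNear (u i) (by positivity)
  choose z hz1 hz2 hz3 using hzex
  choose q hq using hz2
  set w : Ell2 := ∑ i ∈ Finset.range N, lp.single 2 i (z i) with hwdef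
  have hw_coord : ∀ m : ℕ, w m = if m ∈ Finset.range N then z m else 0 := by
    intro m
    rw [hwdef, lp.coeFn_sum]
    simp only [Finset.sum_apply, lp.single_apply, Pi.single_apply, Finset.sum_ite_eq, Finset.sum_dite_eq]
  have hwPu : ‖w - Pu‖ ≤ ε/4 := by
    have hsub : w - Pu = ∑ i ∈ Finset.range N, lp.single 2 i (z i - u i) := by
      rw [hwdef, hPudef, ← Finset.sum_sub_distrib]
      exact Finset.sum_congr rfl fun i _ => (singleSub i (z i) (u i)).symm
    rw [hsub]
    calc ‖∑ i ∈ Finset.range N, lp.single (E := fun _ : ℕ => ℂ) 2 i (z i - u i)‖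
        ≤ ∑ i ∈ Finset.range N, ‖lp.single (E := fun _ : ℕ => ℂ) 2 i (z i - u i)‖ :=
          norm_sum_le _ _
      _ = ∑ i ∈ Finset.range N, ‖z i - u i‖ := by
          refine Finset.sum_congr rfl fun i _ => ?_
          exact lp.norm_single (E := fun _ : ℕ => ℂ) (by norm_num : (0:ℝ≥0∞) < 2) i (z i - u i)
      _ ≤ ∑ i ∈ Finset.range N, ε/(4*(N+1)) := by
          refine Finset.sum_le_sum fun i _ => ?_
          exact le_of_lt (hz1 i)
      _ ≤ ε/4 := by
          rw [Finset.sum_const, Finset.card_range, nsmul_eq_mul]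
          have h1 : (N:ℝ) * (ε / (4 * ((N:ℝ)+1))) = ε * ((N:ℝ) / ((N:ℝ)+1)) / 4 := by
            field_simp
          have h2 : (N:ℝ)/((N:ℝ)+1) ≤ 1 := by
            rw [div_le_one (by positivity)]
            linarith
          have h3 : ε * ((N:ℝ)/((N:ℝ)+1)) ≤ ε * 1 := by
            apply mul_le_mul_of_nonneg_left h2 hε.le
          rw [h1]
          rw [mul_one] at h3
          linarith
  have hwu : ‖w - u‖ ≤ ε/2 := by
    calc ‖w - u‖ ≤ ‖w - Pu‖ + ‖Pu - u‖ := by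
          have : w - u = (w - Pu) + (Pu - u) := by abel
          rw [this]; exact norm_add_le _ _
      _ ≤ ε/4 + ε/4 := add_le_add hwPu hPu_close.le
      _ = ε/2 := by ring
  have hwnorm : 1 - ε/2 ≤ ‖w‖ := by
    have h1 : ‖u‖ - ‖w‖ ≤ ‖u - w‖ := norm_sub_norm_le u w
    rw [norm_sub_rev] at h1
    rw [hu1] at h1
    linarith
  have hwpos : 0 < ‖w‖ := by linarith
  have hwne : w ≠ 0 := norm_pos_iff.mp hwpos
  -- norm squared of w is rational
  set Q : ℚ := ∑ i ∈ Finset.range N, q i with hQdef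
  have hwsq : ‖w‖ ^ 2 = (Q : ℝ) := by
    have h2 : ‖w‖ ^ (2:ℝ≥0∞).toReal = ∑ i ∈ Finset.range N, ‖z i‖ ^ (2:ℝ≥0∞).toReal := by
      rw [hwdef]
      exact lp.norm_sum_single (by norm_num) z (Finset.range N)
    have h3 : (2:ℝ≥0∞).toReal = (2:ℝ) := by norm_num
    rw [h3] at h2
    rw [← Real.rpow_natCast ‖w‖ 2]
    push_cast
    rw [h2, hQdef]
    push_cast
    refine Finset.sum_congr rfl fun i _ => ?_
    rw [← hq i]
    rw [← Real.rpow_natCast ‖z i‖ 2]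
    push_cast
    ring_nf
  have hQpos : (0:ℝ) < (Q:ℝ) := by
    rw [← hwsq]; positivity
  -- the normalized vector
  set v : Ell2 := ((‖w‖ : ℂ))⁻¹ • w with hvdef
  have hvnorm : ‖v‖ = 1 := by
    rw [hvdef, norm_smul, norm_inv, Complex.norm_real, Real.norm_eq_abs,
      abs_of_pos hwpos, inv_mul_cancel₀ hwpos.ne']
  have hv_coord : ∀ m : ℕ, v m = ((‖w‖ : ℂ))⁻¹ * w m := by
    intro m
    rw [hvdef, lp.coeFn_smul]
    rfl
  have hvu : ‖v - u‖ ≤ ε := by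
    have hvw : ‖v - w‖ ≤ ε/2 := by
      have e1 : v - w = (((‖w‖ : ℂ))⁻¹ - 1) • w := by
        rw [hvdef, sub_smul, one_smul]
      have e2 : ((‖w‖ : ℂ))⁻¹ - 1 = (((‖w‖⁻¹ - 1 : ℝ)) : ℂ) := by push_cast; ring
      rw [e1, norm_smul, e2, Complex.norm_real, Real.norm_eq_abs]
      have e3 : |‖w‖⁻¹ - 1| * ‖w‖ = |1 - ‖w‖| := by
        rw [← abs_of_pos hwpos, ← abs_mul, abs_of_pos hwpos, sub_mul,
          inv_mul_cancel₀ hwpos.ne', one_mul, abs_sub_comm]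
      rw [e3]
      have h4 : |‖u‖ - ‖w‖| ≤ ‖u - w‖ := abs_norm_sub_norm_le u w
      rw [hu1] at h4
      rw [norm_sub_rev] at h4
      calc |1 - ‖w‖| ≤ ‖w - u‖ := h4
        _ ≤ ε/2 := hwu
    calc ‖v - u‖ ≤ ‖v - w‖ + ‖w - u‖ := by
          have : v - u = (v - w) + (w - u) := by abel
          rw [this]; exact norm_add_le _ _
      _ ≤ ε/2 + ε/2 := add_le_add hvw hwu
      _ = ε := by ring
  refine ⟨(v, N), hvnorm, ?_, ?_, ?_, le_max_right _ _, ?_⟩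
  · -- rationality
    intro m
    by_cases hm : m ∈ Finset.range N
    · refine ⟨q m / Q, ?_⟩
      rw [hv_coord m, norm_mul, norm_inv, Complex.norm_real, Real.norm_eq_abs, abs_of_pos hwpos]
      rw [mul_pow, hw_coord m, if_pos hm, hq m]
      rw [inv_pow, hwsq]
      push_cast
      ring
    · refine ⟨0, ?_⟩
      rw [hv_coord m, hw_coord m, if_neg hm, mul_zero]
      simp
  · -- zero below b
    intro m hm
    have hum : u m = 0 := hub m hm
    have : z m = 0 := hz3 m hum
    rw [hv_coord m, hw_coord m]
    split_ifs with h
    · rw [this, mul_zero]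
    · rw [mul_zero]
  · -- zero above N
    intro m hm
    rw [hv_coord m, hw_coord m, if_neg (by simp [Finset.mem_range]; omega), mul_zero]
  · -- norm bound
    have h5 : ‖E u‖ - ‖E v‖ ≤ ‖E u - E v‖ := norm_sub_norm_le _ _
    have h6 : E u - E v = E (u - v) := by rw [map_sub]
    have h7 : ‖E (u - v)‖ ≤ ‖u - v‖ := projNormLe E hidem hsa _
    have h8 : ‖u - v‖ ≤ ε := by rwa [norm_sub_rev] at hvu
    rw [h6] at h5
    rw [hEu, hu1] at h5
    have : ‖E v‖ ≥ 1 - ε := by linarith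
    simpa [hεdef] using this

/-- For every infinite-rank projection E on ℓ₂ there is a very orthonormal sequence (vₙ)
with ‖E(vₙ)‖ ≥ 1 - 1/(n+1) for every n. -/
theorem stmt4 (E : Ell2 →L[ℂ] Ell2)
    (hidem : IsIdempotentElem E) (hsa : IsSelfAdjoint E)
    (hrank : ¬ FiniteDimensional ℂ (LinearMap.range (E : Ell2 →ₗ[ℂ] Ell2))) :
    ∃ v : ℕ → Ell2, VeryOrthonormal v ∧
      ∀ n : ℕ, ‖E (v n)‖ ≥ 1 - 1 / (n + 1) := by
  classical
  have key := keyStep E hidem hsa hrank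
  let f : ℕ → Ell2 × ℕ := fun n =>
    Nat.rec (Classical.choose (key 0 0))
      (fun n ih => Classical.choose (key (max (n+1) ih.2) (n+1))) n
  let bnd : ℕ → ℕ := fun n => Nat.rec 0 (fun n _ => max (n+1) (f n).2) n
  have hgood : ∀ n, ‖(f n).1‖ = 1 ∧
      (∀ m : ℕ, ∃ q : ℚ, ‖((f n).1 m : ℂ)‖ ^ 2 = (q : ℝ)) ∧
      (∀ m, m < bnd n → (f n).1 m = 0) ∧ (∀ m, (f n).2 ≤ m → (f n).1 m = 0) ∧
      bnd n ≤ (f n).2 ∧ 1 - 1 / ((n : ℝ) + 1) ≤ ‖E (f n).1‖ := by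
    intro n
    cases n with
    | zero => exact Classical.choose_spec (key 0 0)
    | succ n => exact Classical.choose_spec (key (max (n+1) (f n).2) (n+1))
  have hnb : ∀ n, n ≤ bnd n := by
    intro n
    cases n with
    | zero => exact le_refl 0
    | succ n => exact le_max_left _ _
  have hmono : Monotone fun n => (f n).2 := by
    apply monotone_nat_of_le_succ
    intro n
    exact le_trans (le_max_right (n+1) (f n).2) (hgood (n+1)).2.2.2.2.1
  have hdisj : ∀ i j : ℕ, i < j → ∀ m : ℕ, (f j).1 m ≠ 0 → (f i).1 m = 0 := by
    intro i j hij m hm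
    obtain ⟨k, rfl⟩ : ∃ k, j = k + 1 := ⟨j - 1, by omega⟩
    have h1 : ¬ (m < bnd (k+1)) := fun h => hm ((hgood (k+1)).2.2.1 m h)
    have h2 : (f i).2 ≤ m := by
      have h3 : (f k).2 ≤ bnd (k+1) := le_max_right _ _
      have h4 : (f i).2 ≤ (f k).2 := hmono (by omega : i ≤ k)
      omega
    exact (hgood i).2.2.2.1 m h2
  refine ⟨fun n => (f n).1, ⟨⟨fun n => (hgood n).1, ?_⟩, ?_, ?_⟩, ?_⟩
  · -- pairwise orthogonal
    intro i j hij
    rcases lt_or_gt_of_ne hij with h | h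
    · apply innerZeroOfDisjoint
      intro m
      by_cases hz : (f j).1 m = 0
      · exact Or.inr hz
      · exact Or.inl (hdisj i j h m hz)
    · apply innerZeroOfDisjoint
      intro m
      by_cases hz : (f i).1 m = 0
      · exact Or.inl hz
      · exact Or.inr (hdisj j i h m hz)
  · -- Fin1SqrtQ
    intro n
    refine ⟨(hgood n).1, (hgood n).2.1, ?_⟩
    apply (Set.finite_Iio (f n).2).subset
    intro m hm
    simp only [Set.mem_setOf_eq] at hm
    simp only [Set.mem_Iio]
    by_contra h
    exact hm ((hgood n).2.2.2.1 m (by omega))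
  · -- zeros below n
    intro n m hmn
    exact (hgood n).2.2.1 m (lt_of_lt_of_le hmn (hnb n))
  · -- norm bound
    intro n
    exact (hgood n).2.2.2.2.2
end

section
/- Assume CH (2^ω = ω₁). Suppose (S_α)_{α<ω₂} is a sequence of pairwise disjoint countable subsets of ω₂ and (R_α)_{α<ω₂} is a sequence of countable subsets of ω₂. Then there exist ξ ≠ η < ω₂ such that S_ξ ∩ R_η = ∅ and S_η ∩ R_ξ = ∅. -/
open Cardinal

/-- Assume CH.  If (S_α)_{α<ω₂} are pairwise disjoint countable subsets of ω₂ and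
(R_α)_{α<ω₂} are countable subsets of ω₂, then there are ξ ≠ η with
S_ξ ∩ R_η = ∅ and S_η ∩ R_ξ = ∅.  (ω₂ is represented by a type of cardinality ℵ₂.) -/
theorem stmt7 (CH : Cardinal.continuum = Cardinal.aleph 1)
    (W : Type) (hW : Cardinal.mk W = Cardinal.aleph 2)
    (S R : W → Set W)
    (hSdisj : Pairwise (Function.onFun Disjoint S))
    (hScount : ∀ α, (S α).Countable) (hRcount : ∀ α, (R α).Countable) :
    ∃ ξ η : W, ξ ≠ η ∧ S ξ ∩ R η = ∅ ∧ S η ∩ R ξ = ∅ := by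
  classical
  -- B η : set of α whose S_α meets R_η
  set B : W → Set W := fun η => {α | (S α ∩ R η).Nonempty} with hBdef
  -- the "which S_α am I in" function
  set f : W → W := fun x => if h : ∃ α, x ∈ S α then h.choose else x with hfdef
  have hBsub : ∀ η, B η ⊆ f '' (R η) := by
    intro η α hα
    obtain ⟨x, hxS, hxR⟩ := hα
    refine ⟨x, hxR, ?_⟩
    have hex : ∃ β, x ∈ S β := ⟨α, hxS⟩
    simp only [hfdef, dif_pos hex]
    by_contra hne
    exact Set.disjoint_left.mp (hSdisj hne) hex.choose_spec hxS
  have hBc : ∀ η, (B η).Countable := fun η =>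
    Set.Countable.mono (hBsub η) ((hRcount η).image f)
  -- initial uncountable set
  have hle : aleph 1 ≤ Cardinal.mk W := by
    rw [hW]; exact aleph_le_aleph.mpr (by norm_num)
  obtain ⟨A0, hA0⟩ : ∃ p : Set W, Cardinal.mk p = aleph 1 :=
    Cardinal.le_mk_iff_exists_set.mp hle
  -- iterate closure
  let A : ℕ → Set W := fun n => Nat.rec A0 (fun _ An => An ∪ ⋃ η ∈ An, B η) n
  have hAmono : ∀ n, A n ⊆ A (n + 1) := fun n => Set.subset_union_left
  have hAcard : ∀ n, Cardinal.mk ↥(A n) ≤ aleph 1 := by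
    intro n
    induction n with
    | zero => exact hA0.le
    | succ n ih =>
      have h1 : Cardinal.mk ↥(⋃ η ∈ A n, B η) ≤ Cardinal.mk ↥(A n) * ℵ₀ := by
        refine (Cardinal.mk_biUnion_le B (A n)).trans ?_
        gcongr
        exact ciSup_le' fun η => (hBc η.val).le_aleph0
      calc Cardinal.mk ↥(A (n + 1)) ≤ Cardinal.mk ↥(A n) + Cardinal.mk ↥(⋃ η ∈ A n, B η) :=
            Cardinal.mk_union_le _ _
        _ ≤ aleph 1 + aleph 1 * ℵ₀ := add_le_add ih (h1.trans (by gcongr))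
        _ = aleph 1 := by
            rw [Cardinal.mul_eq_max (aleph0_le_aleph 1) le_rfl]
            simp [Cardinal.add_eq_max (aleph0_le_aleph 1),
              max_eq_left (aleph0_le_aleph 1)]
  set Atot : Set W := ⋃ n, A n with hAtot
  have hAtotcard : Cardinal.mk ↥Atot ≤ aleph 1 := by
    refine (Cardinal.mk_iUnion_le A).trans ?_
    have : (⨆ n, Cardinal.mk ↥(A n)) ≤ aleph 1 := ciSup_le' hAcard
    calc Cardinal.mk ℕ * ⨆ n, Cardinal.mk ↥(A n) ≤ ℵ₀ * aleph 1 := by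
          rw [Cardinal.mk_nat]; gcongr
      _ = aleph 1 := by
          rw [Cardinal.mul_eq_max (le_refl ℵ₀) (aleph0_le_aleph 1)]
          exact max_eq_right (aleph0_le_aleph 1)
  -- closure property
  have hclosed : ∀ ξ ∈ Atot, B ξ ⊆ Atot := by
    intro ξ hξ
    obtain ⟨_, ⟨n, rfl⟩, hn⟩ := hξ
    intro β hβ
    exact Set.mem_iUnion.mpr ⟨n + 1, Set.subset_union_right
      (Set.mem_biUnion hn hβ)⟩
  -- pick η outside Atot
  have : ∃ η, η ∉ Atot := by
    by_contra h
    push_neg at h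
    have : Atot = Set.univ := Set.eq_univ_iff_forall.mpr h
    rw [this, Cardinal.mk_univ, hW] at hAtotcard
    exact absurd hAtotcard (not_le.mpr (aleph_lt_aleph.mpr (by norm_num)))
  obtain ⟨η, hη⟩ := this
  -- pick ξ ∈ A0 \ B η
  have : ∃ ξ ∈ A0, ξ ∉ B η := by
    by_contra h
    push_neg at h
    have hsub : A0 ⊆ B η := h
    have := Cardinal.mk_le_mk_of_subset hsub
    rw [hA0] at this
    have hlt : Cardinal.mk ↥(B η) ≤ ℵ₀ := (Cardinal.mk_le_aleph0_iff).mpr (hBc η)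
    exact absurd (this.trans hlt) (not_le.mpr (aleph0_lt_aleph_one))
  obtain ⟨ξ, hξ0, hξB⟩ := this
  have hξtot : ξ ∈ Atot := Set.mem_iUnion.mpr ⟨0, hξ0⟩
  refine ⟨ξ, η, ?_, ?_, ?_⟩
  · rintro rfl; exact hη hξtot
  · exact Set.not_nonempty_iff_eq_empty.mp hξB
  · have : η ∉ B ξ := fun h => hη (hclosed ξ hξtot h)
    exact Set.not_nonempty_iff_eq_empty.mp this
end

section
/- Let S₁, S₂ ⊆ ω₂ and let σ : ω₂ → ω₂ be a permutation with σ = σ⁻¹, σ[S₁] = S₂ and σ ↾ (S₁ ∩ S₂) = id. Suppose p ∈ ℙ is (σ, S₁, S₂)-symmetric and q ≤ p satisfies (dom(q) ∖ dom(p)) ∩ S₂ ⊆ S₁. Then r = q ∪ σ^ℙ(q ↾ S₁) is a well-defined element of ℙ (i.e., the two partial functions are compatible) and r is (σ, S₁, S₂)-symmetric. -/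
/-- A Cohen forcing condition on the index set W: a partial function W ⇀ Bool,
represented as `W → Option Bool` (it is a condition when its domain is finite). -/
abbrev CohenCond (W : Type) := W → Option Bool

/-- The domain of a partial function. -/
def condDom {W : Type} (p : CohenCond W) : Set W := {α | p α ≠ none}

open Classical in
/-- The restriction p ↾ S of a partial function to a set S. -/
noncomputable def condRestrict {W : Type} (p : CohenCond W) (S : Set W) : CohenCond W :=
  fun α => if α ∈ S then p α else none

/-- The lift σ^ℙ of an involutive permutation σ: σ^ℙ(p)(σ(α)) = p(α), i.e.
σ^ℙ(p)(β) = p(σ⁻¹(β)) = p(σ(β)) since σ = σ⁻¹. -/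
def condLift {W : Type} (σ : W → W) (p : CohenCond W) : CohenCond W :=
  fun β => p (σ β)

/-- p is (σ, S₁, S₂)-symmetric iff σ^ℙ(p ↾ S₁) = p ↾ S₂. -/
def IsSymmetricCond {W : Type} (σ : W → W) (S₁ S₂ : Set W) (p : CohenCond W) : Prop :=
  condLift σ (condRestrict p S₁) = condRestrict p S₂

/-- The union r = q ∪ σ^ℙ(q ↾ S₁) of two partial functions (defined wherever either is). -/
noncomputable def condUnion {W : Type} (q q' : CohenCond W) : CohenCond W :=
  fun α => (q α).or (q' α)

/-- Let σ be an involutive permutation of ω₂ with σ[S₁] = S₂ which is the identity on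
S₁ ∩ S₂.  If p is a (σ, S₁, S₂)-symmetric Cohen condition and q ≤ p satisfies
(dom(q) ∖ dom(p)) ∩ S₂ ⊆ S₁, then r = q ∪ σ^ℙ(q ↾ S₁) is well defined (the two partial
functions are compatible), is a Cohen condition (finite domain), and is
(σ, S₁, S₂)-symmetric. -/
theorem stmt10 (W : Type) (hW : Cardinal.mk W = Cardinal.aleph 2)
    (σ : W → W) (hbij : Function.Bijective σ) (hinv : Function.Involutive σ)
    (S₁ S₂ : Set W) (himg : σ '' S₁ = S₂) (hid : ∀ α ∈ S₁ ∩ S₂, σ α = α)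
    (p q : CohenCond W) (hpfin : (condDom p).Finite) (hqfin : (condDom q).Finite)
    (hpsym : IsSymmetricCond σ S₁ S₂ p)
    (hqp : ∀ α, p α ≠ none → q α = p α)
    (hdom : (condDom q \ condDom p) ∩ S₂ ⊆ S₁) :
    (∀ α b b', q α = some b → condLift σ (condRestrict q S₁) α = some b' → b = b') ∧
    (condDom (condUnion q (condLift σ (condRestrict q S₁)))).Finite ∧
    IsSymmetricCond σ S₁ S₂ (condUnion q (condLift σ (condRestrict q S₁))) := by

  classical
  have hS : ∀ β, σ β ∈ S₁ ↔ β ∈ S₂ := by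
    intro β
    constructor
    · intro h
      rw [← himg]
      exact ⟨σ β, h, hinv β⟩
    · intro h
      rw [← himg] at h
      obtain ⟨x, hx, hxe⟩ := h
      rw [← hxe, hinv]
      exact hx
  have hps : ∀ β, (if σ β ∈ S₁ then p (σ β) else none) = (if β ∈ S₂ then p β else none) := by
    intro β
    have := congrFun hpsym β
    simpa [condLift, condRestrict] using this
  have compat : ∀ α b b', q α = some b → condLift σ (condRestrict q S₁) α = some b' → b = b' := by
    intro α b b' hqa hq'a
    simp only [condLift, condRestrict] at hq'a
    by_cases h1 : σ α ∈ S₁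
    · rw [if_pos h1] at hq'a
      have hα2 : α ∈ S₂ := (hS α).1 h1
      by_cases hp : p α = none
      · have hmem : α ∈ S₁ := hdom ⟨⟨by simp [condDom, hqa], by simp [condDom, hp]⟩, hα2⟩
        have hfix : σ α = α := hid α ⟨hmem, hα2⟩
        rw [hfix] at hq'a
        exact Option.some.inj (hqa.symm.trans hq'a)
      · have hqpa : q α = p α := hqp α hp
        have hpa : p α = some b := by rw [← hqpa, hqa]
        have hiff := hps α
        rw [if_pos h1, if_pos hα2] at hiff
        have hpsa : p (σ α) = some b := by rw [hiff, hpa]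
        have hqsa : q (σ α) = some b := by
          rw [hqp (σ α) (by rw [hpsa]; simp)]
          exact hpsa
        exact Option.some.inj (hqsa.symm.trans hq'a)
    · rw [if_neg h1] at hq'a
      exact absurd hq'a (by simp)
  refine ⟨compat, ?_, ?_⟩
  · apply Set.Finite.subset (hqfin.union (hqfin.image σ))
    intro α hα
    simp only [condDom, condUnion, condLift, condRestrict, Set.mem_setOf_eq] at hα
    by_cases hq : q α = none
    · right
      rw [hq] at hα
      by_cases h1 : σ α ∈ S₁
      · rw [if_pos h1] at hα
        refine ⟨σ α, ?_, hinv α⟩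
        simp only [condDom, Set.mem_setOf_eq]
        simpa [Option.or] using hα
      · rw [if_neg h1] at hα
        simp [Option.or] at hα
    · exact Or.inl hq
  · funext β
    simp only [condLift, condRestrict, condUnion]
    by_cases h2 : β ∈ S₂
    · have h1 : σ β ∈ S₁ := (hS β).2 h2
      rw [if_pos h1, if_pos h2, if_pos h1, hinv]
      by_cases hb1 : β ∈ S₁
      · rw [if_pos hb1]
        rcases hb : q β with _ | b
        · rcases hb' : q (σ β) with _ | b' <;> simp [Option.or]
        · rcases hb' : q (σ β) with _ | b'
          · simp [Option.or]
          · have : b = b' := compat β b b' hb (by simp [condLift, condRestrict, if_pos h1, hb'])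
            simp [Option.or, this]
      · rw [if_neg hb1]
        rcases hb : q β with _ | b
        · cases q (σ β) <;> simp [Option.or]
        · have hp : p β ≠ none := by
            intro hpn
            exact hb1 (hdom ⟨⟨by simp [condDom, hb], by simp [condDom, hpn]⟩, h2⟩)
          have hqpb : q β = p β := hqp β hp
          have hpb : p β = some b := by rw [← hqpb, hb]
          have hiff := hps β
          rw [if_pos h1, if_pos h2] at hiff
          have hpsb : p (σ β) = some b := by rw [hiff, hpb]
          have hqsb : q (σ β) = some b := by
            rw [hqp (σ β) (by rw [hpsb]; simp)]
            exact hpsb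
          simp [Option.or, hqsb, hb]
    · have h1 : σ β ∉ S₁ := fun h => h2 ((hS β).1 h)
      rw [if_neg h1, if_neg h2]
end
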